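/- arXiv:1401.0173 — 2 statements merged into one kernel-verified Lean document; each statement's English description precedes it below -/
import Mathlib

section
/- Let λ be a partition with at most n parts and let β(λ) = #{ℓ ∈ ℕ_0^n : rearranging ℓ in non-increasing order yields λ}. Then β(λ) = binom(n, 𝒥(λ)), where 𝒥(λ) = {j ∈ {1,…,n−1} : λ_j > λ_{j+1}}. Moreover, if μ ≤ λ is a partition with w(μ,λ) = w for a Dyck word w of length 2n with parameters r, L_0,…,L_r, M_0,…,M_r and ℒ = {L_1,…,L_{r−1}}, then β(λ) = binom(n, ℒ) · ∏_{i=1}^r binom(L_i−L_{i−1}, J_i^λ). -/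
noncomputable section

/-- The Gaussian binomial coefficient `binom(a,b)_Y`, as an element of a field,
evaluated at `Y`. -/
def gaussBinom {K : Type*} [Field K] (Y : K) (a b : ℕ) : K :=
  (∏ i ∈ Finset.Icc (a - b + 1) a, (1 - Y ^ i)) / ∏ i ∈ Finset.Icc 1 b, (1 - Y ^ i)

def gaussMultinomAux {K : Type*} [Field K] (Y : K) : ℕ → List ℕ → K
  | _, [] => 1
  | n, i :: is => gaussBinom Y n i * gaussMultinomAux Y i is

/-- The Gaussian multinomial coefficient `binom(n, I)_Y`:
for `I = {i₁ < ⋯ < iₘ}`, this is `binom(n,iₘ)_Y · binom(iₘ,i_{m-1})_Y ⋯ binom(i₂,i₁)_Y`. -/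
def gaussMultinom {K : Type*} [Field K] (Y : K) (n : ℕ) (I : Finset ℕ) : K :=
  gaussMultinomAux Y n ((I.sort (· ≤ ·)).reverse)

def multinomAux : ℕ → List ℕ → ℕ
  | _, [] => 1
  | n, i :: is => n.choose i * multinomAux i is

/-- The ordinary multinomial coefficient `binom(n, I)`, the value of `binom(n,I)_Y` at `Y = 1`. -/
def multinom (n : ℕ) (I : Finset ℕ) : ℕ :=
  multinomAux n ((I.sort (· ≤ ·)).reverse)

/-- The Igusa function `I_h(Y; X_1, …, X_h)`. -/
def igusa {K : Type*} [Field K] (h : ℕ) (Y : K) (X : ℕ → K) : K :=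
  (1 - X h)⁻¹ * ∑ I ∈ (Finset.Icc 1 (h - 1)).powerset,
    gaussMultinom Y h I * ∏ i ∈ I, X i / (1 - X i)

/-- The Igusa function `I_h^∘(Y; X_1, …, X_h)`. -/
def igusaCirc {K : Type*} [Field K] (h : ℕ) (Y : K) (X : ℕ → K) : K :=
  X h * igusa h Y X

/-- The Igusa function at `Y = 1`, `I_h(1; X_1, …, X_h)`, with ordinary multinomials. -/
def igusaOne {K : Type*} [Field K] (h : ℕ) (X : ℕ → K) : K :=
  (1 - X h)⁻¹ * ∑ I ∈ (Finset.Icc 1 (h - 1)).powerset,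
    (multinom h I : K) * ∏ i ∈ I, X i / (1 - X i)

/-- The chains (of arbitrary finite length, including the empty chain) of nonempty proper
subsets of `{1, …, h}`, encoded as finsets of subsets that are totally ordered by inclusion. -/
def chainsOn (h : ℕ) : Finset (Finset (Finset ℕ)) :=
  ((Finset.Icc 1 h).powerset.filter
      (fun I => I ≠ ∅ ∧ I ≠ Finset.Icc 1 h)).powerset.filter
    (fun C => ∀ I ∈ C, ∀ J ∈ C, I ⊆ J ∨ J ⊆ I)

/-- The generalized Igusa function `I^wo_h((X_𝓘)_𝓘)`, with variables indexed by the
nonempty subsets of `{1, …, h}`. -/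
def igusaWO {K : Type*} [Field K] (h : ℕ) (X : Finset ℕ → K) : K :=
  (1 - X (Finset.Icc 1 h))⁻¹ * ∑ C ∈ chainsOn h, ∏ I ∈ C, X I / (1 - X I)

/-- The Igusa function `I_h(Y; X_1, …, X_h)` with power series arguments. -/
def igusaPS (h : ℕ) (Y : ℚ) (X : ℕ → PowerSeries ℚ) : PowerSeries ℚ :=
  (1 - X h)⁻¹ * ∑ I ∈ (Finset.Icc 1 (h - 1)).powerset,
    PowerSeries.C (gaussMultinom Y h I) * ∏ i ∈ I, X i * (1 - X i)⁻¹

/-- The Igusa function `I_h^∘(Y; X_1, …, X_h)` with power series arguments. -/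
def igusaCircPS (h : ℕ) (Y : ℚ) (X : ℕ → PowerSeries ℚ) : PowerSeries ℚ :=
  X h * igusaPS h Y X

/-- The Igusa function `I_h(1; X_1, …, X_h)` with power series arguments. -/
def igusaOnePS (h : ℕ) (X : ℕ → PowerSeries ℚ) : PowerSeries ℚ :=
  (1 - X h)⁻¹ * ∑ I ∈ (Finset.Icc 1 (h - 1)).powerset,
    (multinom h I : PowerSeries ℚ) * ∏ i ∈ I, X i * (1 - X i)⁻¹

/-- The generalized Igusa function `I^wo_h` with power series arguments. -/
def igusaWOPS (h : ℕ) (X : Finset ℕ → PowerSeries ℚ) : PowerSeries ℚ :=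
  (1 - X (Finset.Icc 1 h))⁻¹ * ∑ C ∈ chainsOn h, ∏ I ∈ C, X I * (1 - X I)⁻¹

/-- `lam` encodes a partition `λ_1 ≥ ⋯ ≥ λ_n ≥ 0` with at most `n` parts
(indexed from `1`; the irrelevant values `lam 0` and `lam j` for `j > n` are zero). -/
def IsPartition (n : ℕ) (lam : ℕ → ℕ) : Prop :=
  (∀ j, 1 ≤ j → lam (j + 1) ≤ lam j) ∧ ∀ j, j = 0 ∨ n < j → lam j = 0

/-- `ℓ` encodes an `n`-tuple of non-negative integers, indexed from `1`
(the irrelevant values at `0` and beyond `n` are zero). -/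
def IsTuple (n : ℕ) (ℓ : ℕ → ℕ) : Prop :=
  ∀ j, j = 0 ∨ n < j → ℓ j = 0

/-- The dual partition: `λ'_k = #{j ∈ {1,…,n} : λ_j ≥ k}`. -/
def dualPart (n : ℕ) (lam : ℕ → ℕ) (k : ℕ) : ℕ :=
  ((Finset.Icc 1 n).filter fun j => k ≤ lam j).card

/-- `α(λ, μ; p)`: the number of subgroups of `⊕_{k=1}^n ℤ/p^{λ_k}ℤ` that are isomorphic
to `⊕_{k=1}^n ℤ/p^{μ_k}ℤ`. -/
def alphaCount (p n : ℕ) (lam mu : ℕ → ℕ) : ℕ :=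
  Nat.card {H : AddSubgroup ((j : Fin n) → ZMod (p ^ lam (j.1 + 1))) //
    Nonempty (H ≃+ ((j : Fin n) → ZMod (p ^ mu (j.1 + 1))))}

/-- `β(λ)`: the number of `n`-tuples `ℓ ∈ ℕ₀ⁿ` whose non-increasing rearrangement is `λ`. -/
def betaCount (n : ℕ) (lam : ℕ → ℕ) : ℕ :=
  Nat.card {ℓ : Fin n → ℕ // ∃ σ : Equiv.Perm (Fin n), ∀ j, ℓ (σ j) = lam (j.1 + 1)}

/-- `(r, L, M)` are the parameters of a Dyck word of length `2n`:
`w = 0^{L_1}1^{M_1}0^{L_2-L_1}1^{M_2-M_1}⋯0^{L_r-L_{r-1}}1^{M_r-M_{r-1}}`. -/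
def DyckParams (n r : ℕ) (L M : ℕ → ℕ) : Prop :=
  1 ≤ r ∧ L 0 = 0 ∧ M 0 = 0 ∧ L r = n ∧ M r = n ∧
    ∀ i ∈ Finset.Icc 1 r, L (i - 1) < L i ∧ M (i - 1) < M i ∧ M i ≤ L i

/-- `w(μ, λ) = w` for the Dyck word `w` with parameters `(r, L, M)`:
`λ_{L_i} ≥ μ_{M_{i-1}+1}` for `i ∈ {1,…,r}` and `μ_{M_i} > λ_{L_i+1}` for `i ∈ {1,…,r-1}`. -/
def WMatch (r : ℕ) (L M : ℕ → ℕ) (mu lam : ℕ → ℕ) : Prop :=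
  (∀ i ∈ Finset.Icc 1 r, mu (M (i - 1) + 1) ≤ lam (L i)) ∧
    ∀ i ∈ Finset.Icc 1 (r - 1), lam (L i + 1) < mu (M i)

/-- `t_i = |𝒜_1| + ⋯ + |𝒜_i|` for an ordered set partition `𝒜`. -/
def tpar (𝒜 : ℕ → Finset ℕ) (i : ℕ) : ℕ :=
  ∑ k ∈ Finset.Icc 1 i, (𝒜 k).card

/-- The `j`-th smallest element of a finite set of naturals (`j` counted from `1`). -/
def sortedElt (A : Finset ℕ) (j : ℕ) : ℕ :=
  (A.sort (· ≤ ·)).getD (j - 1) 0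

/-- `ε^{(i)}(𝓘) = L_{i-1} + ∑_{j ∈ 𝓘} f_{a^{(i)}_j}`, where `a^{(i)}_1 < ⋯` are the
elements of `𝒜_i`. -/
def epsA (f L : ℕ → ℕ) (𝒜 : ℕ → Finset ℕ) (i : ℕ) (I : Finset ℕ) : ℕ :=
  L (i - 1) + ∑ j ∈ I, f (sortedElt (𝒜 i) j)

/-- The number of ideals of additive index `m` in the Heisenberg Lie ring `L(R) = R⊕R⊕R`
with bracket `[(a,b,c),(a',b',c')] = (0,0,ab'-a'b)`. -/
def heisenbergIdealCount (R : Type*) [CommRing R] (m : ℕ) : ℕ :=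
  Nat.card {I : AddSubgroup (R × R × R) //
    (∀ x ∈ I, ∀ y : R × R × R, (0, 0, y.1 * x.2.1 - x.1 * y.2.1) ∈ I) ∧ I.index = m}

/-- The explicit rational function `E^f_{w,𝒜}(X,Y)` attached to a Dyck word with parameters
`(r, L, M)` and a compatible ordered set partition `𝒜` of `{1,…,g}`. -/
def Efun {F : Type*} [Field F] (n r : ℕ) (f L M : ℕ → ℕ) (𝒜 : ℕ → Finset ℕ)
    (Xv Yv : F) : F :=
  (∏ i ∈ Finset.Icc 1 r, gaussBinom Xv⁻¹ (L i - M (i - 1)) (L i - M i)) *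
    (∏ i ∈ Finset.Icc 1 r, igusaWO (tpar 𝒜 i - tpar 𝒜 (i - 1))
      (fun I => Xv ^ ((2 * n - M (i - 1) + epsA f L 𝒜 i I) * M (i - 1)) *
        Yv ^ (2 * epsA f L 𝒜 i I + M (i - 1)))) *
    (∏ i ∈ Finset.Icc 1 (r - 1), igusaCirc (M i - M (i - 1)) Xv⁻¹
      (fun j => Xv ^ ((M (i - 1) + j) * (2 * n + L i - (M (i - 1) + j))) *
        Yv ^ (2 * L i + M (i - 1) + j))) *
    igusa (n - M (r - 1)) Xv⁻¹
      (fun j => Xv ^ ((M (r - 1) + j) * (2 * n + L r - (M (r - 1) + j))) *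
        Yv ^ (2 * L r + M (r - 1) + j))

/-- The power series `E^f_{w,𝒜}(p,t)`, the explicit rational function `E^f_{w,𝒜}`
evaluated at `X = p`, `Y = t` and expanded as a power series in `t`. -/
def EfunPS (p n r : ℕ) (f L M : ℕ → ℕ) (𝒜 : ℕ → Finset ℕ) : PowerSeries ℚ :=
  (∏ i ∈ Finset.Icc 1 r,
      PowerSeries.C (gaussBinom ((p : ℚ)⁻¹) (L i - M (i - 1)) (L i - M i))) *
    (∏ i ∈ Finset.Icc 1 r, igusaWOPS (tpar 𝒜 i - tpar 𝒜 (i - 1))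
      (fun I => PowerSeries.C ((p : ℚ) ^ ((2 * n - M (i - 1) + epsA f L 𝒜 i I) * M (i - 1))) *
        PowerSeries.X ^ (2 * epsA f L 𝒜 i I + M (i - 1)))) *
    (∏ i ∈ Finset.Icc 1 (r - 1), igusaCircPS (M i - M (i - 1)) ((p : ℚ)⁻¹)
      (fun j => PowerSeries.C ((p : ℚ) ^ ((M (i - 1) + j) * (2 * n + L i - (M (i - 1) + j)))) *
        PowerSeries.X ^ (2 * L i + M (i - 1) + j))) *
    igusaPS (n - M (r - 1)) ((p : ℚ)⁻¹)
      (fun j => PowerSeries.C ((p : ℚ) ^ ((M (r - 1) + j) * (2 * n + L r - (M (r - 1) + j)))) *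
        PowerSeries.X ^ (2 * L r + M (r - 1) + j))

/-- The set of canonical representatives `(r, L, M, 𝒜)` of all pairs consisting of
a Dyck word `w` of length `2n` and an ordered set partition `𝒜` of `{1,…,g}`
compatible with `w`. -/
def dyckPartData (g n : ℕ) (f : ℕ → ℕ) : Set (ℕ × (ℕ → ℕ) × (ℕ → ℕ) × (ℕ → Finset ℕ)) :=
  {d | DyckParams n d.1 d.2.1 d.2.2.1 ∧
    (∀ j, d.1 < j → d.2.1 j = n ∧ d.2.2.1 j = n) ∧
    (∀ i ∈ Finset.Icc 1 d.1, (d.2.2.2 i).Nonempty) ∧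
    (∀ i ∈ Finset.Icc 1 d.1, ∀ j ∈ Finset.Icc 1 d.1, i ≠ j → Disjoint (d.2.2.2 i) (d.2.2.2 j)) ∧
    (Finset.Icc 1 d.1).biUnion d.2.2.2 = Finset.Icc 1 g ∧
    (∀ i ∈ Finset.Icc 1 d.1, ∑ j ∈ d.2.2.2 i, f j = d.2.1 i - d.2.1 (i - 1)) ∧
    (∀ j, j = 0 ∨ d.1 < j → d.2.2.2 j = ∅)}

/-- The explicit rational function `W^f(X,Y)` expressing the local normal zeta function of
the Heisenberg group at an unramified prime with residue degrees `f_1, …, f_g`. -/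
def Wfun {F : Type*} [Field F] (g n : ℕ) (f : ℕ → ℕ) (Xv Yv : F) : F :=
  (∏ i ∈ Finset.Icc 1 g, (1 - Yv ^ (2 * f i))) *
    (∏ i ∈ Finset.range (2 * n), (1 - Xv ^ i * Yv)⁻¹) *
    ∑ᶠ d ∈ dyckPartData g n f, Efun n d.1 f d.2.1 d.2.2.1 d.2.2.2 Xv Yv
end

/-!
By orbit–stabilizer, `β(λ) · ∏_v m_v! = n!`, where `m_v` is the multiplicity of the part `v`
in `λ`. On the other side, `binom(n, I ∪ {a}) = binom(n, a) · binom(a, I)` whenever `a > max I`,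
and from this `binom(n, D)` splits at any `a ∈ D ∪ {0}` as
`binom(n, a) · binom(a, D ∩ (0, a)) · binom(n - a, n - (D ∩ (a, n)))`, using
`binom(n, u) binom(u, a) = binom(n, a) binom(n - a, n - u)`. Splitting the descent set `𝒥(λ)`
at its largest element and inducting gives `binom(n, 𝒥(λ)) · ∏_v m_v! = n!`, hence the first
formula. Splitting at `L_{r-1}, …, L_1` gives the second: these are descents of `λ`, since
`λ_{L_i+1} < μ_{M_i} ≤ μ_{M_{i-1}+1} ≤ λ_{L_i}`.
-/

open Finset Nat

theorem sort_ge_eq_reverse_sort {α : Type*} [LinearOrder α] (s : Finset α) :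
    s.sort (· ≥ ·) = (s.sort (· ≤ ·)).reverse :=
  List.Perm.eq_of_sortedGE (sortedGT_sort s).sortedGE (sortedLT_sort s).reverse.sortedGE
    (((sort_perm_toList s _).trans (sort_perm_toList s _).symm).trans (List.reverse_perm _).symm)

@[simp]
theorem multinom_empty (n : ℕ) : multinom n ∅ = 1 := by
  simp [multinom, multinomAux]

theorem multinom_insert_of_forall_lt {n a : ℕ} {s : Finset ℕ} (h : ∀ x ∈ s, x < a) :
    multinom n (insert a s) = n.choose a * multinom a s := by
  rw [multinom, multinom, ← sort_ge_eq_reverse_sort, ← sort_ge_eq_reverse_sort,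
    sort_insert _ (fun b hb => (h b hb).le) (fun ha => (h a ha).false), multinomAux]

theorem multinom_insert_zero (n : ℕ) (s : Finset ℕ) :
    multinom n (insert 0 s) = multinom n s := by
  induction s using Finset.induction_on_max generalizing n with
  | empty => rw [multinom_insert_of_forall_lt (by simp)]; simp
  | insert u t ht ih =>
    obtain rfl | hu := Nat.eq_zero_or_pos u
    · simp [eq_empty_of_forall_notMem fun x hx => Nat.not_lt_zero x (ht x hx)]
    · have ht0 : ∀ x ∈ insert 0 t, x < u := by simpa [hu] using ht
      rw [Finset.insert_comm, multinom_insert_of_forall_lt ht0, multinom_insert_of_forall_lt ht,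
        ih]

theorem multinom_union_insert {n a : ℕ} {U s : Finset ℕ} (hU : ∀ x ∈ U, a < x ∧ x < n)
    (hs : ∀ x ∈ s, x < a) :
    multinom n (U ∪ insert a s) =
      n.choose a * multinom (n - a) (U.image (n - ·)) * multinom a s := by
  induction U using Finset.induction_on_min generalizing a s with
  | empty => simp [multinom_insert_of_forall_lt hs]
  | insert u U hu ih =>
    obtain ⟨hau, hun⟩ := hU u (mem_insert_self u U)
    have hUu : ∀ x ∈ U, u < x ∧ x < n := fun x hx => ⟨hu x hx, (hU x (mem_insert_of_mem hx)).2⟩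
    have hsu : ∀ x ∈ insert a s, x < u := by
      simpa [hau] using fun x hx => (hs x hx).trans hau
    have himage : ∀ y ∈ U.image (n - ·), y < n - u := by
      simp only [mem_image]
      rintro _ ⟨x, hx, rfl⟩
      have := hUu x hx
      omega
    rw [insert_union, ← union_insert, ih hUu hsu, multinom_insert_of_forall_lt hs, image_insert,
      multinom_insert_of_forall_lt himage,
      ← (n - a).choose_symm_of_eq_add (by omega : n - a = (u - a) + (n - u))]
    calc _ = n.choose u * u.choose a * multinom (n - u) (U.image (n - ·)) * multinom a s := by
          ring
      _ = _ := by rw [Nat.choose_mul hau.le]; ring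

theorem multinom_filter_Icc_eq_choose_mul_mul (P : ℕ → Prop) [DecidablePred P] {n a : ℕ}
    (han : a < n) (ha : a = 0 ∨ P a) :
    multinom n ((Icc 1 (n - 1)).filter P) =
      n.choose a * multinom a ((Icc 1 (a - 1)).filter P) *
        multinom (n - a) ((Icc 1 (n - a - 1)).filter fun j => P (n - j)) := by
  set U := (Ioo a n).filter P
  have hU : ∀ x ∈ U, a < x ∧ x < n := fun x hx => mem_Ioo.mp (mem_filter.mp hx).1
  have himage : U.image (n - ·) = (Icc 1 (n - a - 1)).filter fun j => P (n - j) := by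
    ext j
    simp only [U, mem_image, mem_filter, mem_Ioo, mem_Icc]
    constructor
    · rintro ⟨x, ⟨hx, hPx⟩, rfl⟩
      exact ⟨by omega, by rwa [Nat.sub_sub_self hx.2.le]⟩
    · rintro ⟨hj, hPj⟩
      exact ⟨n - j, ⟨by omega, hPj⟩, by omega⟩
  obtain rfl | ha0 := Nat.eq_zero_or_pos a
  · have hD : insert 0 ((Icc 1 (n - 1)).filter P) = U ∪ insert 0 ∅ := by
      ext x
      simp only [U, mem_insert, mem_filter, mem_Icc, mem_Ioo, mem_union, notMem_empty]
      constructor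
      · rintro (rfl | ⟨hx, hPx⟩)
        · exact Or.inr (Or.inl rfl)
        · exact Or.inl ⟨by omega, hPx⟩
      · rintro (⟨hx, hPx⟩ | rfl | h)
        · exact Or.inr ⟨by omega, hPx⟩
        · exact Or.inl rfl
        · exact h.elim
    rw [← multinom_insert_zero, hD, multinom_union_insert hU (by simp), himage]
    simp
  · have hD : (Icc 1 (n - 1)).filter P = U ∪ insert a ((Icc 1 (a - 1)).filter P) := by
      ext x
      simp only [U, mem_insert, mem_filter, mem_Icc, mem_Ioo, mem_union]
      constructor
      · rintro ⟨hx, hPx⟩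
        rcases lt_trichotomy x a with h | rfl | h
        · exact Or.inr (Or.inr ⟨by omega, hPx⟩)
        · exact Or.inr (Or.inl rfl)
        · exact Or.inl ⟨⟨h, by omega⟩, hPx⟩
      · rintro (⟨hx, hPx⟩ | rfl | ⟨hx, hPx⟩)
        · exact ⟨by omega, hPx⟩
        · exact ⟨by omega, ha.resolve_left ha0.ne'⟩
        · exact ⟨by omega, hPx⟩
    have hs : ∀ x ∈ (Icc 1 (a - 1)).filter P, x < a := fun x hx => by
      have := (mem_Icc.mp (mem_filter.mp hx).1).2
      omega
    rw [hD, multinom_union_insert hU hs, himage]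
    ring

theorem multinom_image_Icc_succ {L : ℕ → ℕ} {r : ℕ} (hL0 : L 0 = 0)
    (hL : StrictMonoOn L (Set.Iic r)) :
    multinom (L (r + 1)) ((Icc 1 r).image L) =
      (L (r + 1)).choose (L r) * multinom (L r) ((Icc 1 (r - 1)).image L) := by
  obtain rfl | hr := Nat.eq_zero_or_pos r
  · simp [hL0]
  · have hIcc : Icc 1 r = insert r (Icc 1 (r - 1)) := by
      ext i; simp only [mem_Icc, mem_insert]; omega
    rw [hIcc, image_insert, multinom_insert_of_forall_lt]
    simp only [mem_image, mem_Icc]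
    rintro _ ⟨i, hi, rfl⟩
    exact hL (Set.mem_Iic.mpr (by omega)) Set.self_mem_Iic (by omega)

theorem multinom_filter_Icc_eq_mul_prod (P : ℕ → Prop) [DecidablePred P] (L : ℕ → ℕ) (r : ℕ)
    (hL0 : L 0 = 0) (hL : StrictMonoOn L (Set.Iic r)) (hcut : ∀ i ∈ Icc 1 (r - 1), P (L i)) :
    multinom (L r) ((Icc 1 (L r - 1)).filter P) =
      multinom (L r) ((Icc 1 (r - 1)).image L) *
        ∏ i ∈ Icc 1 r, multinom (L i - L (i - 1))
          ((Icc 1 (L i - L (i - 1) - 1)).filter fun j => P (L i - j)) := by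
  induction r with
  | zero => simp [hL0]
  | succ r ih =>
    have hLr : StrictMonoOn L (Set.Iic r) := hL.mono (Set.Iic_subset_Iic.mpr r.le_succ)
    have hcut' : L r = 0 ∨ P (L r) := by
      obtain rfl | hr := Nat.eq_zero_or_pos r
      · exact Or.inl hL0
      · exact Or.inr (hcut r (mem_Icc.mpr ⟨hr, by omega⟩))
    have hstep : L r < L (r + 1) := hL (Set.mem_Iic.mpr r.le_succ) Set.self_mem_Iic r.lt_succ_self
    rw [multinom_filter_Icc_eq_choose_mul_mul P hstep hcut',
      ih hLr fun i hi => hcut i (Icc_subset_Icc_right (by omega) hi), prod_Icc_succ_top (by omega),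
      Nat.add_sub_cancel, multinom_image_Icc_succ hL0 hLr]
    ring

theorem card_rearrangements_mul_prod_factorial {α ι : Type*} [Fintype α] [DecidableEq α]
    [DecidableEq ι] (f : α → ι) :
    Nat.card {ℓ : α → ι // ∃ σ : Equiv.Perm α, ∀ j, ℓ (σ j) = f j} *
      ∏ v ∈ univ.image f, (Fintype.card {j // f j = v})! = (Fintype.card α)! := by
  let G := (Equiv.Perm α)ᵈᵐᵃ
  have horbit : {ℓ : α → ι // ∃ σ : Equiv.Perm α, ∀ j, ℓ (σ j) = f j} ≃
      MulAction.orbit G f := Equiv.subtypeEquivRight fun ℓ => by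
    simp only [MulAction.mem_orbit_iff, funext_iff]
    constructor
    · rintro ⟨σ, hσ⟩
      refine ⟨DomMulAct.mk σ⁻¹, fun j => ?_⟩
      show f (σ⁻¹ j) = ℓ j
      rw [← hσ]
      simp
    · rintro ⟨g, hg⟩
      refine ⟨(DomMulAct.mk.symm g)⁻¹, fun j => ?_⟩
      rw [← hg]
      show f (DomMulAct.mk.symm g ((DomMulAct.mk.symm g)⁻¹ j)) = f j
      simp
  have hstab : {σ : Equiv.Perm α // f ∘ σ = f} ≃ MulAction.stabilizer G f :=
    Equiv.subtypeEquiv DomMulAct.mk fun σ => by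
      rw [DomMulAct.mem_stabilizer_iff, Equiv.symm_apply_apply]
  rw [Nat.card_congr horbit, ← DomMulAct.stabilizer_card', ← Nat.card_eq_fintype_card,
    Nat.card_congr hstab, ← Nat.card_prod,
    Nat.card_congr (MulAction.orbitProdStabilizerEquivGroup G f),
    Nat.card_congr DomMulAct.mk.symm, Nat.card_perm, Nat.card_eq_fintype_card]

def multiplicityFactorialProd (n : ℕ) (lam : ℕ → ℕ) : ℕ :=
  ∏ v ∈ (Icc 1 n).image lam, (#{j ∈ Icc 1 n | lam j = v})!

theorem prod_factorial_card_fiber_eq_multiplicityFactorialProd (n : ℕ) (lam : ℕ → ℕ) :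
    ∏ v ∈ univ.image (fun j : Fin n => lam (j + 1)),
        (Fintype.card {j : Fin n // lam (j + 1) = v})! = multiplicityFactorialProd n lam := by
  let e : Fin n ↪ ℕ := Fin.valEmbedding.trans (addRightEmbedding 1)
  have hmap : ∀ (p : ℕ → Prop) [DecidablePred p],
      (univ.filter fun j : Fin n => p (j + 1)).map e = (Icc 1 n).filter p := by
    intro p _
    ext k
    simp only [mem_map, mem_filter, mem_univ, true_and, mem_Icc, e,
      Function.Embedding.trans_apply, Fin.valEmbedding_apply, addRightEmbedding_apply]
    constructor
    · rintro ⟨j, hj, rfl⟩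
      exact ⟨⟨by omega, j.2⟩, hj⟩
    · rintro ⟨hk, hpk⟩
      exact ⟨⟨k - 1, by omega⟩, by simpa [Nat.sub_add_cancel hk.1] using hpk,
        Nat.sub_add_cancel hk.1⟩
  have himage : univ.image (fun j : Fin n => lam (j + 1)) = (Icc 1 n).image lam := by
    have := hmap fun _ => True
    simp only [filter_true] at this
    rw [← this, map_eq_image, image_image]
    rfl
  rw [multiplicityFactorialProd, himage]
  refine prod_congr rfl fun v _ => ?_
  rw [Fintype.card_subtype, ← card_map e, hmap fun k => lam k = v]

theorem multiplicityFactorialProd_eq_mul_factorial {n a : ℕ} {lam : ℕ → ℕ} (han : a < n)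
    (hconst : ∀ j ∈ Ioc a n, lam j = lam n) (hlt : ∀ j ∈ Icc 1 a, lam n < lam j) :
    multiplicityFactorialProd n lam = multiplicityFactorialProd a lam * (n - a)! := by
  have himage : (Icc 1 n).image lam = insert (lam n) ((Icc 1 a).image lam) := by
    ext v
    simp only [mem_image, mem_insert, mem_Icc]
    constructor
    · rintro ⟨j, hj, rfl⟩
      by_cases hja : j ≤ a
      · exact Or.inr ⟨j, ⟨hj.1, hja⟩, rfl⟩
      · exact Or.inl (hconst j (mem_Ioc.mpr ⟨by omega, hj.2⟩))
    · rintro (rfl | ⟨j, hj, rfl⟩)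
      · exact ⟨n, ⟨by omega, le_rfl⟩, rfl⟩
      · exact ⟨j, ⟨hj.1, by omega⟩, rfl⟩
  have hnotMem : lam n ∉ (Icc 1 a).image lam := by
    simp only [mem_image, not_exists, not_and]
    exact fun j hj => (hlt j hj).ne'
  have hfiber_last : {j ∈ Icc 1 n | lam j = lam n} = Ioc a n := by
    ext j
    simp only [mem_filter, mem_Icc, mem_Ioc]
    constructor
    · rintro ⟨hj, hjn⟩
      by_contra hja
      exact (hlt j (mem_Icc.mpr ⟨hj.1, by omega⟩)).ne' hjn
    · intro hj
      exact ⟨⟨by omega, hj.2⟩, hconst j (mem_Ioc.mpr hj)⟩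
  have hfiber : ∀ v ∈ (Icc 1 a).image lam,
      {j ∈ Icc 1 n | lam j = v} = {j ∈ Icc 1 a | lam j = v} := by
    simp only [mem_image]
    rintro _ ⟨i, hi, rfl⟩
    ext j
    simp only [mem_filter, mem_Icc]
    constructor
    · rintro ⟨hj, hji⟩
      refine ⟨⟨hj.1, ?_⟩, hji⟩
      by_contra hja
      rw [hconst j (mem_Ioc.mpr ⟨by omega, hj.2⟩)] at hji
      exact (hlt i hi).ne hji
    · rintro ⟨hj, hji⟩
      exact ⟨⟨hj.1, by omega⟩, hji⟩
  rw [multiplicityFactorialProd, himage, prod_insert hnotMem, hfiber_last, card_Ioc, mul_comm,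
    multiplicityFactorialProd]
  congr 1
  exact prod_congr rfl fun v hv => by rw [hfiber v hv]

theorem exists_last_descent {n : ℕ} {lam : ℕ → ℕ} (hlam : AntitoneOn lam (Set.Icc 1 n))
    (hn : 0 < n) :
    ∃ a < n, (a = 0 ∨ lam (a + 1) < lam a) ∧ ∀ j ∈ Ioc a n, lam j = lam n := by
  set D := (Icc 1 (n - 1)).filter fun j => lam (j + 1) < lam j
  obtain ⟨a, han, ha, hlast⟩ : ∃ a < n, (a = 0 ∨ lam (a + 1) < lam a) ∧ ∀ j ∈ D, j ≤ a := by
    by_cases hD : D.Nonempty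
    · obtain ⟨hmem, hdesc⟩ := mem_filter.mp (D.max'_mem hD)
      have := (mem_Icc.mp hmem).2
      exact ⟨D.max' hD, by omega, Or.inr hdesc, fun j hj => D.le_max' j hj⟩
    · exact ⟨0, hn, Or.inl rfl, by simp [not_nonempty_iff_eq_empty.mp hD]⟩
  have hflat : ∀ j, a < j → j < n → lam (j + 1) = lam j := by
    intro j haj hjn
    have hnot : ¬ lam (j + 1) < lam j := fun hdesc =>
      absurd (hlast j (mem_filter.mpr ⟨mem_Icc.mpr ⟨by omega, by omega⟩, hdesc⟩)) (by omega)
    exact le_antisymm (hlam ⟨by omega, by omega⟩ ⟨by omega, by omega⟩ (by omega)) (not_lt.mp hnot)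
  refine ⟨a, han, ha, fun j hj => ?_⟩
  obtain ⟨haj, hjn⟩ := mem_Ioc.mp hj
  clear hj
  induction hjn using Nat.decreasingInduction with
  | self => rfl
  | of_succ j hjn ih => rw [← hflat j haj hjn, ih (by omega)]

theorem multinom_descents_mul_multiplicityFactorialProd {lam : ℕ → ℕ} (n : ℕ)
    (hlam : AntitoneOn lam (Set.Icc 1 n)) :
    multinom n ((Icc 1 (n - 1)).filter fun j => lam (j + 1) < lam j) *
      multiplicityFactorialProd n lam = n ! := by
  induction n using Nat.strong_induction_on with
  | _ n ih =>
  obtain rfl | hn := Nat.eq_zero_or_pos n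
  · simp [multiplicityFactorialProd]
  obtain ⟨a, han, ha, hconst⟩ := exists_last_descent hlam hn
  have hlt : ∀ j ∈ Icc 1 a, lam n < lam j := fun j hj => by
    obtain ⟨h1j, hja⟩ := mem_Icc.mp hj
    have hdesc := ha.resolve_left (by omega)
    rw [← hconst (a + 1) (mem_Ioc.mpr ⟨by omega, by omega⟩)]
    exact hdesc.trans_le (hlam ⟨h1j, by omega⟩ ⟨by omega, by omega⟩ hja)
  have hlast_block :
      ((Icc 1 (n - a - 1)).filter fun j => lam (n - j + 1) < lam (n - j)) = ∅ := by
    refine filter_false_of_mem fun j hj => ?_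
    simp only [mem_Icc] at hj
    rw [hconst (n - j) (mem_Ioc.mpr ⟨by omega, by omega⟩),
      hconst (n - j + 1) (mem_Ioc.mpr ⟨by omega, by omega⟩)]
    exact lt_irrefl _
  have ha' := ih a han (hlam.mono (Set.Icc_subset_Icc_right han.le))
  rw [multinom_filter_Icc_eq_choose_mul_mul _ han ha, hlast_block, multinom_empty,
    multiplicityFactorialProd_eq_mul_factorial han hconst hlt]
  calc _ = n.choose a * (multinom a ((Icc 1 (a - 1)).filter fun j => lam (j + 1) < lam j) *
        multiplicityFactorialProd a lam) * (n - a)! := by ring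
    _ = n ! := by rw [ha', Nat.choose_mul_factorial_mul_factorial han.le]

theorem betaCount_eq_multinom_descents {n : ℕ} {lam : ℕ → ℕ}
    (hlam : AntitoneOn lam (Set.Icc 1 n)) :
    betaCount n lam = multinom n ((Icc 1 (n - 1)).filter fun j => lam (j + 1) < lam j) := by
  have hpos : 0 < multiplicityFactorialProd n lam := prod_pos fun _ _ => factorial_pos _
  apply Nat.eq_of_mul_eq_mul_right hpos
  rw [multinom_descents_mul_multiplicityFactorialProd n hlam, betaCount,
    ← prod_factorial_card_fiber_eq_multiplicityFactorialProd,
    card_rearrangements_mul_prod_factorial, Fintype.card_fin]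

theorem IsPartition.antitoneOn {n : ℕ} {lam : ℕ → ℕ} (h : IsPartition n lam) :
    AntitoneOn lam (Set.Ici 1) :=
  antitoneOn_of_add_one_le Set.ordConnected_Ici fun j _ hj _ => h.1 j hj

/-- `β(λ) = binom(n, 𝒥(λ))` where `𝒥(λ) = {j ∈ {1,…,n-1} : λ_j > λ_{j+1}}`; moreover, if
`μ ≤ λ` with `w(μ,λ) = w` for a Dyck word `w` with parameters `(r, L, M)` and
`ℒ = {L_1,…,L_{r-1}}`, then `β(λ) = binom(n,ℒ) · ∏_{i=1}^r binom(L_i-L_{i-1}, J_i^λ)`. -/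
theorem betaCount_eq_multinom (n : ℕ) (lam : ℕ → ℕ) (hlam : IsPartition n lam) :
    betaCount n lam =
        multinom n ((Finset.Icc 1 (n - 1)).filter fun j => lam (j + 1) < lam j) ∧
      ∀ (r : ℕ) (L M mu : ℕ → ℕ), DyckParams n r L M → IsPartition n mu →
        (∀ j, mu j ≤ lam j) → WMatch r L M mu lam →
        betaCount n lam =
          multinom n ((Finset.Icc 1 (r - 1)).image L) *
            ∏ i ∈ Finset.Icc 1 r,
              multinom (L i - L (i - 1))
                ((Finset.Icc 1 (L i - L (i - 1) - 1)).filter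
                  fun j => lam (L i - j + 1) < lam (L i - j)) := by
  have hbeta :=
    betaCount_eq_multinom_descents (n := n) (hlam.antitoneOn.mono Set.Icc_subset_Ici_self)
  refine ⟨hbeta, fun r L M mu hw hmu _ hwm => ?_⟩
  obtain ⟨-, hL0, -, hLr, -, hsteps⟩ := hw
  have hL : StrictMonoOn L (Set.Iic r) :=
    strictMonoOn_Iic_of_lt_succ fun i hi => (hsteps (i + 1) (mem_Icc.mpr ⟨by omega, by omega⟩)).1
  have hcut : ∀ i ∈ Icc 1 (r - 1), lam (L i + 1) < lam (L i) := fun i hi => by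
    obtain ⟨h1i, hir⟩ := mem_Icc.mp hi
    have hM := (hsteps i (mem_Icc.mpr ⟨h1i, by omega⟩)).2.1
    calc lam (L i + 1) < mu (M i) := hwm.2 i hi
      _ ≤ mu (M (i - 1) + 1) :=
        hmu.antitoneOn (Set.mem_Ici.mpr (by omega)) (Set.mem_Ici.mpr (by omega)) (by omega)
      _ ≤ lam (L i) := hwm.1 i (mem_Icc.mpr ⟨h1i, by omega⟩)
  rw [hbeta, ← hLr]
  exact multinom_filter_Icc_eq_mul_prod _ L r hL0 hL hcut
end

section
/- For every h ∈ ℕ, the Igusa function satisfies the functional equation I_h(Y^{−1}; X_1^{−1},…,X_h^{−1}) = (−1)^h · X_h · Y^{−h(h−1)/2} · I_h(Y; X_1,…,X_h) in the field of rational functions ℚ(Y,X_1,…,X_h). -/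
/-!
Substituting `X_i ↦ X_i⁻¹` turns `X_i / (1 - X_i)` into `-1 - X_i / (1 - X_i)`, so after expanding
the products, the coefficient of `∏_{j ∈ J} X_j / (1 - X_j)` in `I_h(Y⁻¹; X⁻¹)` is the alternating
sum `∑_{J ⊆ I ⊆ {1,…,h-1}} (-1)^{|I|} binom(h, I)_{Y⁻¹}`. This sum equals
`(-1)^{h-1} Y^{-h(h-1)/2} binom(h, J)_Y`: removing the largest element `t` of `J` factors it into
the same sum for `binom(t, J \ {t})` and a sum over the subsets of `{t+1,…,h-1}`; the latter is
evaluated by induction with the q-Pascal rule, and the powers of `Y` are matched by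
`binom(a+b, a)_{Y⁻¹} = Y^{-ab} binom(a+b, a)_Y`.
-/

open Finset

lemma sum_powerset_mul_prod_neg_one_sub {ι R : Type*} [DecidableEq ι] [CommRing R]
    (s : Finset ι) (c : Finset ι → R) (u : ι → R) :
    ∑ I ∈ s.powerset, c I * ∏ i ∈ I, (-1 - u i) =
      ∑ J ∈ s.powerset, (∑ I ∈ Icc J s, (-1) ^ #I * c I) * ∏ j ∈ J, u j := by
  have hprod (I : Finset ι) :
      ∏ i ∈ I, (-1 - u i) = (-1) ^ #I * ∑ J ∈ I.powerset, ∏ j ∈ J, u j := by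
    rw [← prod_one_add, ← prod_const, ← prod_mul_distrib]
    exact prod_congr rfl fun i _ => by ring
  simp only [hprod, mul_sum, sum_mul]
  rw [sum_comm' (t' := s.powerset) (s' := fun J => Icc J s)]
  · exact sum_congr rfl fun J _ => sum_congr rfl fun I _ => by ring
  · intro I J
    simp only [mem_powerset, mem_Icc]
    constructor
    · rintro ⟨hI, hJ⟩
      exact ⟨⟨hJ, hI⟩, hJ.trans hI⟩
    · rintro ⟨⟨hJ, hI⟩, -⟩
      exact ⟨hI, hJ⟩

lemma Nat.choose_two_add (a b : ℕ) : (a + b).choose 2 = a.choose 2 + b.choose 2 + a * b := by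
  induction b with
  | zero => simp
  | succ b ih =>
    rw [← add_assoc, Nat.choose_succ_succ', Nat.choose_one_right, ih, Nat.choose_succ_succ',
      Nat.choose_one_right]
    ring

section Field

variable {K : Type*} [Field K] {q : K}

def qFactorial (q : K) (n : ℕ) : K := ∏ i ∈ Icc 1 n, (1 - q ^ i)

lemma qFactorial_succ (q : K) (n : ℕ) :
    qFactorial q (n + 1) = qFactorial q n * (1 - q ^ (n + 1)) :=
  prod_Icc_succ_top (Nat.le_add_left 1 n) _

lemma qFactorial_ne_zero (hq : ∀ n, 0 < n → q ^ n ≠ 1) (n : ℕ) : qFactorial q n ≠ 0 :=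
  prod_ne_zero_iff.mpr fun i hi => sub_ne_zero.mpr (hq i (mem_Icc.mp hi).1).symm

lemma qFactorial_inv (hq0 : q ≠ 0) (n : ℕ) :
    qFactorial q⁻¹ n * q ^ (n + 1).choose 2 = (-1) ^ n * qFactorial q n := by
  induction n with
  | zero => simp [qFactorial]
  | succ n ih =>
    have key : (1 - q⁻¹ ^ (n + 1)) * q ^ (n + 1) = -(1 - q ^ (n + 1)) := by
      rw [inv_pow, sub_mul, inv_mul_cancel₀ (pow_ne_zero _ hq0)]
      ring
    rw [qFactorial_succ, qFactorial_succ, Nat.choose_succ_succ', Nat.choose_one_right, pow_add]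
    linear_combination (1 - q⁻¹ ^ (n + 1)) * q ^ (n + 1) * ih + (-1) ^ n * qFactorial q n * key

lemma gaussBinom_eq_div (hq : ∀ n, 0 < n → q ^ n ≠ 1) (a b : ℕ) :
    gaussBinom q (a + b) a = qFactorial q (a + b) / (qFactorial q a * qFactorial q b) := by
  have hsplit : qFactorial q (a + b) = qFactorial q b * ∏ i ∈ Ioc b (a + b), (1 - q ^ i) := by
    rw [qFactorial, qFactorial, ← zero_add 1, Icc_add_one_left_eq_Ioc, Icc_add_one_left_eq_Ioc,
      prod_Ioc_consecutive _ (Nat.zero_le b) (Nat.le_add_left b a)]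
  rw [gaussBinom, Nat.add_sub_cancel_left, Icc_add_one_left_eq_Ioc, hsplit]
  have := qFactorial_ne_zero hq b
  field_simp
  rfl

lemma gaussBinom_zero_right (q : K) (a : ℕ) : gaussBinom q a 0 = 1 := by
  simp [gaussBinom]

lemma gaussBinom_self (hq : ∀ n, 0 < n → q ^ n ≠ 1) (a : ℕ) : gaussBinom q a a = 1 := by
  rw [gaussBinom, Nat.sub_self, zero_add]
  exact div_self (qFactorial_ne_zero hq a)

lemma gaussBinom_succ_succ (hq : ∀ n, 0 < n → q ^ n ≠ 1) (a b : ℕ) :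
    gaussBinom q (a + b + 2) (a + 1) =
      gaussBinom q (a + b + 1) a + q ^ (a + 1) * gaussBinom q (a + b + 1) (a + 1) := by
  rw [show a + b + 2 = (a + 1) + (b + 1) by ring, show a + b + 1 = a + (b + 1) by ring,
    gaussBinom_eq_div hq, gaussBinom_eq_div hq, show a + (b + 1) = (a + 1) + b by ring,
    gaussBinom_eq_div hq, show a + 1 + (b + 1) = a + b + 1 + 1 by ring,
    show a + 1 + b = a + b + 1 by ring, qFactorial_succ, qFactorial_succ q a,
    qFactorial_succ q b]
  have := qFactorial_ne_zero hq a
  have := qFactorial_ne_zero hq b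
  have := qFactorial_ne_zero hq (a + b + 1)
  have := sub_ne_zero.mpr (hq (a + 1) (by omega)).symm
  have := sub_ne_zero.mpr (hq (b + 1) (by omega)).symm
  field_simp
  ring

lemma gaussBinom_mul_gaussBinom (hq : ∀ n, 0 < n → q ^ n ≠ 1) (a b c : ℕ) :
    gaussBinom q (a + b + c) (a + b) * gaussBinom q (a + b) a =
      gaussBinom q (a + b + c) a * gaussBinom q (b + c) b := by
  rw [gaussBinom_eq_div hq, gaussBinom_eq_div hq, add_assoc a b c, gaussBinom_eq_div hq,
    gaussBinom_eq_div hq]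
  have := qFactorial_ne_zero hq a
  have := qFactorial_ne_zero hq b
  have := qFactorial_ne_zero hq c
  have := qFactorial_ne_zero hq (a + b)
  have := qFactorial_ne_zero hq (b + c)
  field_simp

lemma inv_pow_ne_one (hq : ∀ n, 0 < n → q ^ n ≠ 1) : ∀ n, 0 < n → q⁻¹ ^ n ≠ 1 :=
  fun n hn => by
    rw [inv_pow, inv_ne_one]
    exact hq n hn

lemma gaussBinom_inv (hq0 : q ≠ 0) (hq : ∀ n, 0 < n → q ^ n ≠ 1) (a b : ℕ) :
    gaussBinom q (a + b) a = q ^ (a * b) * gaussBinom q⁻¹ (a + b) a := by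
  have hinv (n : ℕ) : qFactorial q⁻¹ n = (-1) ^ n * qFactorial q n / q ^ (n + 1).choose 2 := by
    rw [← qFactorial_inv hq0 n, mul_div_cancel_right₀ _ (pow_ne_zero _ hq0)]
  have hexp : (a + b + 1).choose 2 = (a + 1).choose 2 + (b + 1).choose 2 + a * b := by
    rw [add_right_comm, Nat.choose_two_add, Nat.choose_succ_succ' a, Nat.choose_succ_succ' b,
      Nat.choose_one_right, Nat.choose_one_right]
    ring
  rw [gaussBinom_eq_div hq, gaussBinom_eq_div (inv_pow_ne_one hq), hinv, hinv, hinv, hexp,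
    pow_add, pow_add]
  have := qFactorial_ne_zero hq a
  have := qFactorial_ne_zero hq b
  have := pow_ne_zero ((a + 1).choose 2) hq0
  have := pow_ne_zero ((b + 1).choose 2) hq0
  have := pow_ne_zero (a * b) hq0
  field_simp
  ring

lemma gaussMultinom_empty (q : K) (n : ℕ) : gaussMultinom q n ∅ = 1 := by
  rw [gaussMultinom, sort_empty]
  rfl

lemma gaussMultinom_insert_of_forall_lt {A : Finset ℕ} {k : ℕ} (hA : ∀ x ∈ A, x < k) (n : ℕ) :
    gaussMultinom q n (insert k A) = gaussBinom q n k * gaussMultinom q k A := by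
  have hsort : ((insert k A).sort (· ≤ ·)).reverse = k :: (A.sort (· ≤ ·)).reverse := by
    apply List.Pairwise.eq_of_mem_iff (r := (· > ·))
    · exact List.pairwise_reverse.mpr (sortedLT_sort _).pairwise
    · refine List.pairwise_cons.mpr ⟨fun x hx => hA x (by simpa using hx), ?_⟩
      exact List.pairwise_reverse.mpr (sortedLT_sort _).pairwise
    · simp
  rw [gaussMultinom, hsort]
  rfl

lemma gaussMultinom_singleton (q : K) (n k : ℕ) : gaussMultinom q n {k} = gaussBinom q n k := by
  rw [← insert_empty, gaussMultinom_insert_of_forall_lt (by simp), gaussMultinom_empty, mul_one]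

lemma gaussMultinom_insert_zero (q : K) (n : ℕ) (A : Finset ℕ) :
    gaussMultinom q n (insert 0 A) = gaussMultinom q n A := by
  induction A using Finset.induction_on_max generalizing n with
  | empty =>
    rw [insert_empty, gaussMultinom_singleton, gaussBinom_zero_right, gaussMultinom_empty]
  | insert a A hA ih =>
    rcases Nat.eq_zero_or_pos a with rfl | ha
    · rw [insert_idem]
    · rw [insert_comm, gaussMultinom_insert_of_forall_lt, gaussMultinom_insert_of_forall_lt hA, ih]
      simpa [ha] using hA

def signedMultinomSum (q : K) (n a k : ℕ) (J : Finset ℕ) : K :=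
  ∑ I ∈ Icc J (Icc a k), (-1) ^ #I * gaussMultinom q n I

lemma signedMultinomSum_of_not_subset {n a k : ℕ} {J : Finset ℕ} (hJ : ¬J ⊆ Icc a k) :
    signedMultinomSum q n a k J = 0 := by
  rw [signedMultinomSum, Icc_eq_empty hJ, sum_empty]

lemma signedMultinomSum_of_lt (q : K) (n : ℕ) {a k : ℕ} (hka : k < a) :
    signedMultinomSum q n a k ∅ = 1 := by
  rw [signedMultinomSum, Icc_eq_empty_of_lt hka, Icc_self, sum_singleton, card_empty, pow_zero,
    one_mul, gaussMultinom_empty]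

lemma signedMultinomSum_succ (n : ℕ) {a k : ℕ} (hak : a ≤ k + 1) (J : Finset ℕ) :
    signedMultinomSum q n a (k + 1) J =
      signedMultinomSum q n a k J -
        gaussBinom q n (k + 1) * signedMultinomSum q (k + 1) a k (J.erase (k + 1)) := by
  have hIcc : Icc a (k + 1) = insert (k + 1) (Icc a k) := by
    ext x
    simp only [mem_Icc, mem_insert]
    omega
  simp only [signedMultinomSum, Icc_eq_filter_powerset, sum_filter]
  rw [hIcc, sum_powerset_insert (by simp), sub_eq_add_neg, mul_sum, ← sum_neg_distrib]
  congr 1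
  refine sum_congr rfl fun I hI => ?_
  have hIk : ∀ x ∈ I, x < k + 1 := fun x hx => by
    have := mem_Icc.mp (mem_powerset.mp hI hx)
    omega
  simp only [subset_insert_iff]
  rw [card_insert_of_notMem fun h => (hIk _ h).false, gaussMultinom_insert_of_forall_lt hIk]
  split_ifs <;> ring

lemma signedMultinomSum_insert (n : ℕ) {t k : ℕ} (htk : t + 1 ≤ k) {J : Finset ℕ}
    (hJ : J ⊆ Icc 1 t) :
    signedMultinomSum q n 1 k (insert (t + 1) J) =
      signedMultinomSum q n (t + 1) k {t + 1} * signedMultinomSum q (t + 1) 1 t J := by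
  have htJ : t + 1 ∉ J := fun h => by simpa using hJ h
  induction k, htk using Nat.le_induction generalizing n with
  | base =>
    rw [signedMultinomSum_succ _ (by omega), signedMultinomSum_succ _ le_rfl, erase_insert htJ,
      erase_singleton, signedMultinomSum_of_lt _ _ (Nat.lt_succ_self t),
      signedMultinomSum_of_not_subset (a := 1) (k := t) (J := insert (t + 1) J)
        fun h => by simpa using h (mem_insert_self _ _),
      signedMultinomSum_of_not_subset (a := t + 1) (k := t) (J := {t + 1}) (by simp)]
    ring
  | succ k htk ih =>
    have hk : k + 1 ∉ insert (t + 1) J := fun h => by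
      rcases mem_insert.mp h with h | h
      · omega
      · have := (mem_Icc.mp (hJ h)).2
        omega
    rw [signedMultinomSum_succ _ (by omega), signedMultinomSum_succ _ (by omega),
      erase_eq_of_notMem hk, erase_eq_of_notMem (s := {t + 1}) (a := k + 1) (by simp; omega), ih,
      ih]
    ring

lemma signedMultinomSum_singleton (hq : ∀ n, 0 < n → q ^ n ≠ 1) (t m v : ℕ) :
    signedMultinomSum q (t + m + v + 1) t (t + m) {t} =
      -((-1) ^ m * q ^ (m + 1).choose 2 * gaussBinom q (t + m + v + 1) t *
        gaussBinom q (m + v) m) := by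
  induction m generalizing v with
  | zero =>
    rw [signedMultinomSum, add_zero, Icc_self, Icc_self, sum_singleton, gaussMultinom_singleton,
      gaussBinom_zero_right]
    simp
  | succ m ih =>
    have hfirst := ih (v + 1)
    rw [show t + m + (v + 1) + 1 = t + m + 1 + v + 1 by ring,
      show m + (v + 1) = m + v + 1 by ring] at hfirst
    have hsecond := ih 0
    rw [add_zero, add_zero, gaussBinom_self hq, mul_one] at hsecond
    have hprod := gaussBinom_mul_gaussBinom hq (q := q) t (m + 1) (v + 1)
    rw [show t + (m + 1) + (v + 1) = t + m + 1 + v + 1 by ring,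
      show t + (m + 1) = t + m + 1 by ring, show m + 1 + (v + 1) = m + v + 2 by ring] at hprod
    have hpascal := gaussBinom_succ_succ hq (q := q) m v
    rw [show t + (m + 1) = t + m + 1 by ring, signedMultinomSum_succ _ (by omega),
      erase_eq_of_notMem (s := {t}) (a := t + m + 1) (by simp; omega), hfirst, hsecond,
      Nat.choose_succ_succ' (m + 1), Nat.choose_one_right, pow_add,
      show m + 1 + v = m + v + 1 by ring]
    linear_combination (-1) ^ m * q ^ (m + 1).choose 2 * (hprod +
      gaussBinom q (t + m + 1 + v + 1) t * hpascal)

lemma signedMultinomSum_zero_singleton (q : K) (n k : ℕ) :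
    signedMultinomSum q n 0 k {0} = -signedMultinomSum q n 1 k ∅ := by
  have hIcc : Icc 0 k = insert 0 (Icc 1 k) := by
    ext x
    simp only [mem_Icc, mem_insert]
    omega
  simp only [signedMultinomSum, Icc_eq_filter_powerset, sum_filter, empty_subset, if_true]
  rw [hIcc, sum_powerset_insert (by simp), ← sum_neg_distrib]
  have hfirst : ∀ I ∈ (Icc 1 k).powerset,
      (if {0} ⊆ I then (-1 : K) ^ #I * gaussMultinom q n I else 0) = 0 := fun I hI => by
    have h0 : 0 ∉ I := fun h => by simpa using mem_powerset.mp hI h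
    simp [h0]
  rw [sum_eq_zero hfirst, zero_add]
  refine sum_congr rfl fun I hI => ?_
  have h0 : 0 ∉ I := fun h => by simpa using mem_powerset.mp hI h
  rw [if_pos (by simp), card_insert_of_notMem h0, gaussMultinom_insert_zero, pow_succ]
  ring

/-- The `t = 0` case of `signedMultinomSum_singleton`, as adjoining `0` does not change a
Gaussian multinomial. -/
lemma signedMultinomSum_empty (hq : ∀ n, 0 < n → q ^ n ≠ 1) (m : ℕ) :
    signedMultinomSum q (m + 1) 1 m ∅ = (-1) ^ m * q ^ (m + 1).choose 2 := by
  have h := signedMultinomSum_singleton hq (q := q) 0 m 0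
  simp only [zero_add, add_zero, gaussBinom_zero_right, gaussBinom_self hq, mul_one] at h
  rw [← neg_neg (signedMultinomSum q (m + 1) 1 m ∅), ← signedMultinomSum_zero_singleton, h,
    neg_neg]

theorem signedMultinomSum_eq (hq0 : q ≠ 0) (hq : ∀ n, 0 < n → q ^ n ≠ 1) (h : ℕ) {J : Finset ℕ}
    (hJ : J ⊆ Icc 1 h) :
    signedMultinomSum q (h + 1) 1 h J =
      (-1) ^ h * q ^ (h + 1).choose 2 * gaussMultinom q⁻¹ (h + 1) J := by
  induction J using Finset.induction_on_max generalizing h with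
  | empty => rw [signedMultinomSum_empty hq, gaussMultinom_empty, mul_one]
  | insert a J hJa ih =>
    obtain ⟨t, m, rfl, rfl⟩ : ∃ t m, a = t + 1 ∧ h = t + 1 + m := by
      have := mem_Icc.mp (hJ (mem_insert_self a J))
      exact ⟨a - 1, h - a, by omega, by omega⟩
    have hJt : J ⊆ Icc 1 t := fun x hx => by
      have := mem_Icc.mp (hJ (mem_insert_of_mem hx))
      have := hJa x hx
      simp only [mem_Icc]
      omega
    have hexp : (t + 1 + m + 1).choose 2 =
        (t + 1).choose 2 + (m + 1).choose 2 + (t + 1) * (m + 1) := by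
      rw [add_assoc, Nat.choose_two_add]
    have hsingle := signedMultinomSum_singleton hq (q := q) (t + 1) m 0
    rw [add_zero, add_zero, gaussBinom_self hq, mul_one, add_assoc (t + 1) m 1,
      gaussBinom_inv hq0 hq, ← add_assoc] at hsingle
    rw [signedMultinomSum_insert _ (by omega) hJt, hsingle, ih t hJt,
      gaussMultinom_insert_of_forall_lt hJa, hexp, pow_add, pow_add, pow_add]
    ring

theorem igusa_inv (hq0 : q ≠ 0) (hq : ∀ n, 0 < n → q ^ n ≠ 1) {X : ℕ → K} (hX0 : ∀ i, X i ≠ 0)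
    (hX1 : ∀ i, X i ≠ 1) (h : ℕ) :
    igusa (h + 1) q⁻¹ (fun i => (X i)⁻¹) =
      (-1) ^ (h + 1) * X (h + 1) * (q ^ (h + 1).choose 2)⁻¹ * igusa (h + 1) q X := by
  have hXinv (i : ℕ) : (1 - (X i)⁻¹)⁻¹ = -(X i / (1 - X i)) := by
    have := sub_ne_zero.mpr (hX1 i).symm
    have := sub_ne_zero.mpr (hX1 i)
    have := hX0 i
    field_simp
    ring
  have hX (i : ℕ) : (X i)⁻¹ / (1 - (X i)⁻¹) = -1 - X i / (1 - X i) := by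
    have := sub_ne_zero.mpr (hX1 i).symm
    rw [div_eq_mul_inv, hXinv, mul_neg, ← mul_div_assoc, inv_mul_cancel₀ (hX0 i)]
    field_simp
    ring
  have hcoef : ∀ J ∈ (Icc 1 h).powerset,
      (∑ I ∈ Icc J (Icc 1 h), (-1) ^ #I * gaussMultinom q⁻¹ (h + 1) I) *
          ∏ j ∈ J, X j / (1 - X j) =
        (-1) ^ h * q⁻¹ ^ (h + 1).choose 2 *
          (gaussMultinom q (h + 1) J * ∏ j ∈ J, X j / (1 - X j)) := by
    intro J hJ
    have := signedMultinomSum_eq (inv_ne_zero hq0) (inv_pow_ne_one hq) h (mem_powerset.mp hJ)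
    rw [inv_inv] at this
    rw [← signedMultinomSum, this, mul_assoc]
  simp only [igusa, Nat.add_sub_cancel, hX]
  rw [sum_powerset_mul_prod_neg_one_sub, sum_congr rfl hcoef, ← mul_sum, hXinv, inv_pow]
  ring

end Field

section RationalFunctions

variable {σ R : Type*} [CommRing R] [IsDomain R]

lemma algebraMap_X_ne_zero (i : σ) :
    algebraMap (MvPolynomial σ R) (FractionRing (MvPolynomial σ R)) (MvPolynomial.X i) ≠ 0 :=
  (map_ne_zero_iff _ (IsFractionRing.injective _ _)).mpr (MvPolynomial.X_ne_zero i)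

lemma algebraMap_X_pow_ne_one (i : σ) {n : ℕ} (hn : 0 < n) :
    algebraMap (MvPolynomial σ R) (FractionRing (MvPolynomial σ R)) (MvPolynomial.X i) ^ n ≠
      1 := by
  rw [← map_pow, ← map_one (algebraMap (MvPolynomial σ R) _),
    (IsFractionRing.injective _ _).ne_iff]
  intro h
  simpa [hn.ne'] using congrArg MvPolynomial.constantCoeff h

end RationalFunctions

/-- Functional equation for the Igusa function `I_h`:
`I_h(Y⁻¹; X_1⁻¹,…,X_h⁻¹) = (-1)^h · X_h · Y^{-h(h-1)/2} · I_h(Y; X_1,…,X_h)`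
in the field of rational functions `ℚ(Y, X_1, …, X_h)` (here `Y` is the variable with
index `0` and `X_i` the variable with index `i`). -/
theorem igusa_funEq (h : ℕ) (hh : 0 < h) :
    igusa h
        (algebraMap (MvPolynomial ℕ ℚ) (FractionRing (MvPolynomial ℕ ℚ))
          (MvPolynomial.X 0))⁻¹
        (fun i => (algebraMap (MvPolynomial ℕ ℚ) (FractionRing (MvPolynomial ℕ ℚ))
          (MvPolynomial.X i))⁻¹) =
      (-1) ^ h *
        algebraMap (MvPolynomial ℕ ℚ) (FractionRing (MvPolynomial ℕ ℚ)) (MvPolynomial.X h) *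
        (algebraMap (MvPolynomial ℕ ℚ) (FractionRing (MvPolynomial ℕ ℚ))
            (MvPolynomial.X 0) ^ (h * (h - 1) / 2))⁻¹ *
        igusa h
          (algebraMap (MvPolynomial ℕ ℚ) (FractionRing (MvPolynomial ℕ ℚ))
            (MvPolynomial.X 0))
          (fun i => algebraMap (MvPolynomial ℕ ℚ) (FractionRing (MvPolynomial ℕ ℚ))
            (MvPolynomial.X i)) := by
  obtain ⟨n, rfl⟩ : ∃ n, h = n + 1 := ⟨h - 1, by omega⟩
  rw [← Nat.choose_two_right]
  exact igusa_inv (algebraMap_X_ne_zero 0) (fun _ => algebraMap_X_pow_ne_one 0)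
    algebraMap_X_ne_zero (fun i => by simpa using algebraMap_X_pow_ne_one i one_pos) n
end
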